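/- Energy decay step of the three-level scheme: Let D, R, B be symmetric N×N real matrices with D positive semidefinite, R − (1/4)D positive semidefinite, and B positive definite, let τ > 0, and let c^{n+1}, c^n, c^{n−1}, F ∈ ℝ^N satisfy B (c^{n+1} − c^{n−1})/(2τ) + R (c^{n+1} − 2c^n + c^{n−1}) + D c^n = F. Define E^n = ⟨(R − (1/4)D)(c^n − c^{n−1}), c^n − c^{n−1}⟩ + ⟨D (c^n + c^{n−1})/2, (c^n + c^{n−1})/2⟩ (and analogously E^{n+1}). Then E^{n+1} ≤ E^n + (τ/2) ⟨B⁻¹ F, F⟩. -/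

import Mathlib

/-!
Polarising both quadratic forms gives
`E^{n+1} - E^n = ⟨R (c^{n+1} - 2c^n + c^{n-1}) + D c^n, u⟩` with `u = c^{n+1} - c^{n-1}`,
which by the scheme equals `⟨F, u⟩ - ⟨B u, u⟩ / (2τ)`. Young's inequality in the `B`-inner
product, `2⟨F, u⟩ ≤ ⟨B u, u⟩ + ⟨B⁻¹ F, F⟩`, applied to `τ F`, bounds this by `(τ/2) ⟨B⁻¹ F, F⟩`.
-/

open Matrix

namespace Matrix

variable {n α : Type*} [Fintype n]

theorem IsSymm.mulVec_dotProduct_comm [CommSemiring α] {M : Matrix n n α} (hM : M.IsSymm)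
    (x y : n → α) : M *ᵥ x ⬝ᵥ y = M *ᵥ y ⬝ᵥ x := by
  rw [dotProduct_comm, dotProduct_mulVec, ← mulVec_transpose, hM.eq]

theorem IsSymm.mulVec_sub_dotProduct_add [CommRing α] {M : Matrix n n α} (hM : M.IsSymm)
    (x y : n → α) : M *ᵥ (x - y) ⬝ᵥ (x + y) = M *ᵥ x ⬝ᵥ x - M *ᵥ y ⬝ᵥ y := by
  rw [mulVec_sub, sub_dotProduct, dotProduct_add, dotProduct_add, hM.mulVec_dotProduct_comm x y]
  ring

theorem PosDef.two_mul_dotProduct_le [DecidableEq n] {B : Matrix n n ℝ} (hB : B.PosDef)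
    (u F : n → ℝ) : 2 * (F ⬝ᵥ u) ≤ B *ᵥ u ⬝ᵥ u + B⁻¹ *ᵥ F ⬝ᵥ F := by
  set g := B⁻¹ *ᵥ F
  have hBg : B *ᵥ g = F := by
    rw [mulVec_mulVec, mul_nonsing_inv _ ((isUnit_iff_isUnit_det B).mp hB.isUnit), one_mulVec]
  have hB_symm : B.IsSymm := isHermitian_iff_isSymm.mp hB.isHermitian
  have hexpand : B *ᵥ (u - g) ⬝ᵥ (u - g) = B *ᵥ u ⬝ᵥ u - 2 * (F ⬝ᵥ u) + g ⬝ᵥ F := by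
    rw [mulVec_sub, sub_dotProduct, dotProduct_sub, dotProduct_sub,
      hB_symm.mulVec_dotProduct_comm u g, hBg, dotProduct_comm F g]
    ring
  have hnonneg : 0 ≤ B *ᵥ (u - g) ⬝ᵥ (u - g) := by
    simpa [dotProduct_comm] using hB.posSemidef.dotProduct_mulVec_nonneg (u - g)
  linarith

end Matrix

section ThreeLevelEnergy

variable {n : Type*} [Fintype n]

/-- `threeLevelEnergy R D c c'` is the paper's `E^n` with `c = c^n` and `c' = c^{n-1}`. -/
noncomputable def threeLevelEnergy (R D : Matrix n n ℝ) (c c' : n → ℝ) : ℝ :=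
  (R - (1 / 4 : ℝ) • D) *ᵥ (c - c') ⬝ᵥ (c - c')
    + D *ᵥ ((1 / 2 : ℝ) • (c + c')) ⬝ᵥ ((1 / 2 : ℝ) • (c + c'))

theorem threeLevelEnergy_sub {R D : Matrix n n ℝ} (hR : R.IsSymm) (hD : D.IsSymm)
    (cp cn cm : n → ℝ) :
    threeLevelEnergy R D cp cn - threeLevelEnergy R D cn cm
      = (R *ᵥ (cp - (2 : ℝ) • cn + cm) + D *ᵥ cn) ⬝ᵥ (cp - cm) := by
  have hRD := (hR.sub (hD.smul (1 / 4 : ℝ))).mulVec_sub_dotProduct_add (cp - cn) (cn - cm)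
  have hDD := hD.mulVec_sub_dotProduct_add ((1 / 2 : ℝ) • (cp + cn)) ((1 / 2 : ℝ) • (cn + cm))
  rw [threeLevelEnergy, threeLevelEnergy, add_sub_add_comm, ← hRD, ← hDD,
    hD.mulVec_dotProduct_comm]
  simp only [sub_mulVec, smul_mulVec, mulVec_sub, mulVec_add, mulVec_smul, sub_dotProduct,
    add_dotProduct, smul_dotProduct, dotProduct_sub, dotProduct_add, dotProduct_smul, smul_eq_mul]
  ring

end ThreeLevelEnergy

theorem energy_decay_three_level_general (N : ℕ)
    (D R B : Matrix (Fin N) (Fin N) ℝ)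
    (hD : D.PosSemidef) (hB : B.PosDef)
    (hRsymm : R.IsSymm)
    (τ : ℝ) (hτ : 0 < τ)
    (cp cn cm F : Fin N → ℝ)
    (hscheme : (1 / (2 * τ)) • B.mulVec (cp - cm)
        + R.mulVec (cp - (2 : ℝ) • cn + cm) + D.mulVec cn = F) :
    (R - (1 / 4 : ℝ) • D).mulVec (cp - cn) ⬝ᵥ (cp - cn)
        + D.mulVec ((1 / 2 : ℝ) • (cp + cn)) ⬝ᵥ ((1 / 2 : ℝ) • (cp + cn))
      ≤ (R - (1 / 4 : ℝ) • D).mulVec (cn - cm) ⬝ᵥ (cn - cm)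
          + D.mulVec ((1 / 2 : ℝ) • (cn + cm)) ⬝ᵥ ((1 / 2 : ℝ) • (cn + cm))
          + (τ / 2) * (B⁻¹.mulVec F ⬝ᵥ F) := by
  change threeLevelEnergy R D cp cn ≤ threeLevelEnergy R D cn cm + _
  set u := cp - cm
  have henergy := threeLevelEnergy_sub hRsymm (isHermitian_iff_isSymm.mp hD.isHermitian) cp cn cm
  have hbalance : B *ᵥ u ⬝ᵥ u + 2 * τ * ((R *ᵥ (cp - (2 : ℝ) • cn + cm) + D *ᵥ cn) ⬝ᵥ u)
      = 2 * τ * (F ⬝ᵥ u) := by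
    rw [← hscheme]
    simp only [add_dotProduct, smul_dotProduct, smul_eq_mul]
    field_simp
    ring
  have hyoung := hB.two_mul_dotProduct_le u (τ • F)
  simp only [mulVec_smul, smul_dotProduct, dotProduct_smul, smul_eq_mul] at hyoung
  have hscaled : 2 * τ * (threeLevelEnergy R D cp cn - threeLevelEnergy R D cn cm)
      ≤ 2 * τ * (τ / 2 * (B⁻¹ *ᵥ F ⬝ᵥ F)) := by
    rw [henergy]
    linarith
  linarith [le_of_mul_le_mul_left hscaled (by positivity)]

theorem energy_decay_three_level (N : ℕ)
    (D R B : Matrix (Fin N) (Fin N) ℝ)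
    (hD : D.PosSemidef) (hRD : (R - (1 / 4 : ℝ) • D).PosSemidef) (hB : B.PosDef)
    (hRsymm : R.IsSymm)
    (τ : ℝ) (hτ : 0 < τ)
    (cp cn cm F : Fin N → ℝ)
    (hscheme : (1 / (2 * τ)) • B.mulVec (cp - cm)
        + R.mulVec (cp - (2 : ℝ) • cn + cm) + D.mulVec cn = F) :
    (R - (1 / 4 : ℝ) • D).mulVec (cp - cn) ⬝ᵥ (cp - cn)
        + D.mulVec ((1 / 2 : ℝ) • (cp + cn)) ⬝ᵥ ((1 / 2 : ℝ) • (cp + cn))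
      ≤ (R - (1 / 4 : ℝ) • D).mulVec (cn - cm) ⬝ᵥ (cn - cm)
          + D.mulVec ((1 / 2 : ℝ) • (cn + cm)) ⬝ᵥ ((1 / 2 : ℝ) • (cn + cm))
          + (τ / 2) * (B⁻¹.mulVec F ⬝ᵥ F) :=
  energy_decay_three_level_general N D R B hD hB hRsymm τ hτ cp cn cm F hscheme
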